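/- arXiv:2006.14753 — 6 statements merged into one kernel-verified Lean document; each statement's English description precedes it below -/
import Mathlib

section
/- Let d be a positive integer, C > 0, α ∈ ℝ, and let s ∈ ℝ satisfy s < d(α − 1/2). Let (c_j)_{j≥1} be real numbers with |c_j| ≤ C j^{−α} for all j ≥ 1, let (λ_j)_{j≥1} be nonnegative reals such that λ_j / j^{2/d} converges to some κ > 0 as j → ∞, and let (ζ_j)_{j≥1} be independent standard real Gaussian random variables. Then almost surely the series Σ_{j≥1} c_j² ζ_j² (1 + λ_j)^s converges. -/
/-!
Weyl's law gives `(1 + λ_j)^s = O(j^{2s/d})`, so the deterministic weights `c_j² (1 + λ_j)^s`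
are `O(j^{-(2α - 2s/d)})` and summable because `2α - 2s/d > 1`. Since `E[ζ_j²] = 1`, the random
series has finite expectation `Σ_j c_j² (1 + λ_j)^s`, hence is finite almost surely.
-/

open MeasureTheory ProbabilityTheory Filter Asymptotics Topology
open scoped ENNReal

section RandomSeries

variable {Ω 𝕜 E : Type*} {_ : MeasurableSpace Ω} {μ : Measure Ω}
  [NormedField 𝕜] [NormedAddCommGroup E] [NormedSpace 𝕜 E] [CompleteSpace E]

theorem ae_summable_smul_of_eLpNorm_le {a : ℕ → 𝕜} (ha : Summable fun j => ‖a j‖)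
    {X : ℕ → Ω → E} (hX : ∀ j, AEStronglyMeasurable (X j) μ)
    {M : ℝ≥0∞} (hM : M ≠ ∞) (hXM : ∀ j, eLpNorm (X j) 1 μ ≤ M) :
    ∀ᵐ ω ∂μ, Summable fun j => a j • X j ω := by
  have hnorms : ∑' j, eLpNorm (a j • X j) 1 μ ≠ ∞ := by
    refine ne_top_of_le_ne_top ?_ (ENNReal.tsum_le_tsum fun j => ?_ :
      ∑' j, eLpNorm (a j • X j) 1 μ ≤ ∑' j, ‖a j‖ₑ * M)
    · rw [ENNReal.tsum_mul_right]
      exact ENNReal.mul_ne_top (tsum_enorm_ne_top_iff_summable_norm.2 ha) hM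
    · rw [eLpNorm_const_smul]
      exact mul_le_mul_right (hXM j) _
  filter_upwards [summable_norm_of_tsum_eLpNorm_ne_top le_rfl
    (fun j => (hX j).const_smul (a j)) hnorms] with ω hω
  exact hω.of_norm

end RandomSeries

theorem eLpNorm_sq_gaussianReal_ne_top (m : ℝ) (v : NNReal) :
    eLpNorm (fun x : ℝ => x ^ 2) 1 (gaussianReal m v) ≠ ∞ :=
  (memLp_one_iff_integrable.2 ((memLp_two_iff_integrable_sq aestronglyMeasurable_id).1
    (memLp_id_gaussianReal 2))).eLpNorm_ne_top

theorem tendsto_one_add_div_rpow {lam : ℕ → ℝ} {r κ : ℝ} (hr : 0 < r)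
    (hlam : Tendsto (fun j => lam j / (j : ℝ) ^ r) atTop (𝓝 κ)) :
    Tendsto (fun j => (1 + lam j) / (j : ℝ) ^ r) atTop (𝓝 κ) := by
  have hinv : Tendsto (fun j : ℕ => 1 / (j : ℝ) ^ r) atTop (𝓝 0) := by
    simp only [one_div]
    exact tendsto_inv_atTop_zero.comp ((tendsto_rpow_atTop hr).comp tendsto_natCast_atTop_atTop)
  simpa only [add_div, zero_add] using hinv.add hlam

theorem isBigO_one_add_rpow_of_tendsto_div_rpow {lam : ℕ → ℝ} {r κ : ℝ} (hr : 0 < r)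
    (hκ : 0 < κ) (hlam : Tendsto (fun j => lam j / (j : ℝ) ^ r) atTop (𝓝 κ)) (s : ℝ) :
    (fun j => (1 + lam j) ^ s) =O[atTop] fun j => (j : ℝ) ^ (r * s) := by
  have hlim := tendsto_one_add_div_rpow hr hlam
  refine isBigO_of_div_tendsto_nhds ?_ (κ ^ s) ((hlim.rpow_const (Or.inl hκ.ne')).congr' ?_)
  · filter_upwards [eventually_gt_atTop 0] with j hj hzero
    exact absurd hzero (Real.rpow_pos_of_pos (Nat.cast_pos.2 hj) _).ne'
  · filter_upwards [hlim.eventually_const_lt hκ, eventually_gt_atTop 0] with j hpos hj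
    have hjr : (0 : ℝ) < (j : ℝ) ^ r := by positivity
    have h1 : 0 ≤ 1 + lam j := (div_pos_iff_of_pos_right hjr).1 hpos |>.le
    rw [Pi.div_apply, Real.div_rpow h1 hjr.le, ← Real.rpow_mul (Nat.cast_nonneg j)]

theorem summable_sq_mul_one_add_rpow {c lam : ℕ → ℝ} {α r s κ : ℝ} (hr : 0 < r)
    (hκ : 0 < κ) (hrs : r * s < 2 * α - 1) (hc : c =O[atTop] fun j => (j : ℝ) ^ (-α))
    (hlam : Tendsto (fun j => lam j / (j : ℝ) ^ r) atTop (𝓝 κ)) :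
    Summable fun j => c j ^ 2 * (1 + lam j) ^ s := by
  have hbound : (fun j => c j ^ 2 * (1 + lam j) ^ s) =O[atTop]
      fun j => (j : ℝ) ^ (-α + -α + r * s) := by
    refine ((hc.pow 2).mul (isBigO_one_add_rpow_of_tendsto_div_rpow hr hκ hlam s)).congr'
      (Eventually.of_forall fun j => rfl) ?_
    filter_upwards [eventually_gt_atTop 0] with j hj
    have hj' : (0 : ℝ) < j := Nat.cast_pos.2 hj
    rw [Real.rpow_add hj', Real.rpow_add hj', sq]
  exact summable_of_isBigO_nat (Real.summable_nat_rpow.2 (by linarith)) hbound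

theorem stmt_1_general {Ω : Type*} [MeasurableSpace Ω] (μ : Measure Ω)
    (d : ℕ) (hd : 0 < d) (C : ℝ) (α s : ℝ)
    (hs : s < d * (α - 1 / 2))
    (c : ℕ → ℝ) (hc : ∀ j : ℕ, 1 ≤ j → |c j| ≤ C * (j : ℝ) ^ (-α))
    (lam : ℕ → ℝ) (κ : ℝ) (hκ : 0 < κ)
    (hweyl : Tendsto (fun j : ℕ => lam j / (j : ℝ) ^ (2 / (d : ℝ))) atTop (nhds κ))
    (ζ : ℕ → Ω → ℝ)
    (hdist : ∀ j, μ.map (ζ j) = gaussianReal 0 1) :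
    ∀ᵐ ω ∂μ, Summable (fun j : ℕ => (c j) ^ 2 * (ζ j ω) ^ 2 * (1 + lam j) ^ s) := by
  have hd' : (0 : ℝ) < d := Nat.cast_pos.2 hd
  have hc' : c =O[atTop] fun j => (j : ℝ) ^ (-α) := by
    refine IsBigO.of_bound C ?_
    filter_upwards [eventually_ge_atTop 1] with j hj
    rw [Real.norm_eq_abs, Real.norm_of_nonneg (Real.rpow_nonneg (Nat.cast_nonneg j) _)]
    exact hc j hj
  have hcoeff := summable_sq_mul_one_add_rpow (s := s) (div_pos two_pos hd') hκ
    (by rw [div_mul_eq_mul_div, div_lt_iff₀ hd']; linarith) hc' hweyl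
  have hζ : ∀ j, AEMeasurable (ζ j) μ := fun j =>
    .of_map_ne_zero (by rw [hdist j]; exact IsProbabilityMeasure.ne_zero _)
  have hmoment : ∀ j, eLpNorm (fun ω => ζ j ω ^ 2) 1 μ
      = eLpNorm (fun x : ℝ => x ^ 2) 1 (gaussianReal 0 1) := fun j => by
    rw [← hdist j, eLpNorm_map_measure (by fun_prop) (hζ j)]
    rfl
  filter_upwards [ae_summable_smul_of_eLpNorm_le hcoeff.norm
    (fun j => ((hζ j).pow_const 2).aestronglyMeasurable)
    (eLpNorm_sq_gaussianReal_ne_top 0 1) (fun j => (hmoment j).le)] with ω hω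
  simpa only [smul_eq_mul, mul_right_comm] using hω

/-- If `|c_j| ≤ C j^{-α}`, `λ_j ∼ κ j^{2/d}` (Weyl's law), and `(ζ_j)` are i.i.d. standard
Gaussians, then for `s < d(α - 1/2)`, almost surely the series
`Σ_j c_j² ζ_j² (1 + λ_j)^s` converges. -/
theorem stmt_1 {Ω : Type*} [MeasurableSpace Ω] (μ : Measure Ω) [IsProbabilityMeasure μ]
    (d : ℕ) (hd : 0 < d) (C : ℝ) (hC : 0 < C) (α s : ℝ)
    (hs : s < d * (α - 1 / 2))
    (c : ℕ → ℝ) (hc : ∀ j : ℕ, 1 ≤ j → |c j| ≤ C * (j : ℝ) ^ (-α))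
    (lam : ℕ → ℝ) (hlam : ∀ j, 0 ≤ lam j) (κ : ℝ) (hκ : 0 < κ)
    (hweyl : Tendsto (fun j : ℕ => lam j / (j : ℝ) ^ (2 / (d : ℝ))) atTop (nhds κ))
    (ζ : ℕ → Ω → ℝ)
    (hmeas : ∀ j, Measurable (ζ j))
    (hindep : iIndepFun ζ μ)
    (hdist : ∀ j, μ.map (ζ j) = gaussianReal 0 1) :
    ∀ᵐ ω ∂μ, Summable (fun j : ℕ => (c j) ^ 2 * (ζ j ω) ^ 2 * (1 + lam j) ^ s) :=
  stmt_1_general μ d hd C α s hs c hc lam κ hκ hweyl ζ hdist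
end

section
/- Let (M, dist) be a metric space, T : M → M a bijection, and write T^k for the k-th iterate of T for k ∈ ℤ (negative k denoting iterates of the inverse). Suppose T is expansive with constant δ > 0: for all x ≠ y in M there exists k ∈ ℤ with dist(T^k x, T^k y) > δ. Suppose moreover there are constants Λ' > 1, L ≥ Λ' and n₀ ∈ ℕ such that for every k ∈ ℤ the map T^k is Lipschitz with Lipschitz constant Λ'^{|k|} if |k| ≥ n₀, and with Lipschitz constant L^{|k|} if |k| < n₀. Then there exists C > 0 such that for every n ≥ 1 and all points x ≠ y with T^n x = x and T^n y = y, one has dist(x, y) ≥ C Λ'^{−n/2}. -/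
/-!
Shift the expansiveness time `k` of two `n`-periodic points by a multiple of `n` to a time
`k'` with `|k'| ≤ n / 2`; this does not move the orbits. The Lipschitz bounds then give
`δ < dist (T^k' x) (T^k' y) ≤ L^n₀ Λ'^{n/2} dist x y`, so `C = δ / L^n₀` works.
-/

open Equiv

lemma Int.exists_dvd_sub_and_two_mul_abs_le (k : ℤ) {n : ℕ} (hn : 0 < n) :
    ∃ k' : ℤ, (n : ℤ) ∣ k - k' ∧ 2 * |k'| ≤ n :=
  ⟨k.bmod n, Int.ModEq.dvd (Int.bmod_emod : k.bmod n % n = k % n),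
    by have := Int.le_bmod (x := k) hn; have := Int.bmod_le (x := k) hn; grind⟩

lemma Equiv.Perm.zpow_apply_eq_of_dvd_sub {α : Type*} {T : Perm α} {n k k' : ℤ} {x : α}
    (hx : (T ^ n) x = x) (h : n ∣ k - k') : (T ^ k) x = (T ^ k') x := by
  obtain ⟨m, hm⟩ := h
  have hfix : ((T ^ n) ^ m) x = x := Function.IsFixedPt.perm_zpow hx m
  rw [show k = k' + n * m by omega, zpow_add, Perm.mul_apply, zpow_mul, hfix]

lemma exists_two_mul_abs_le_and_lt_dist_of_periodic {M : Type*} [MetricSpace M] {T : Perm M}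
    {δ : ℝ} (hexp : ∀ x y : M, x ≠ y → ∃ k : ℤ, δ < dist ((T ^ k) x) ((T ^ k) y))
    {n : ℕ} (hn : 0 < n) {x y : M} (hxy : x ≠ y)
    (hx : (T ^ (n : ℤ)) x = x) (hy : (T ^ (n : ℤ)) y = y) :
    ∃ k : ℤ, 2 * |k| ≤ n ∧ δ < dist ((T ^ k) x) ((T ^ k) y) := by
  obtain ⟨k, hk⟩ := hexp x y hxy
  obtain ⟨k', hdvd, hk'⟩ := Int.exists_dvd_sub_and_two_mul_abs_le k hn
  refine ⟨k', hk', ?_⟩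
  rwa [← Perm.zpow_apply_eq_of_dvd_sub hx hdvd, ← Perm.zpow_apply_eq_of_dvd_sub hy hdvd]

lemma dist_zpow_apply_le {M : Type*} [MetricSpace M] {T : Perm M} {Λ' L : ℝ} {n₀ : ℕ}
    (hΛ' : 1 ≤ Λ') (hL : 1 ≤ L)
    (hlip1 : ∀ k : ℤ, (n₀ : ℤ) ≤ |k| → ∀ x y : M,
      dist ((T ^ k) x) ((T ^ k) y) ≤ Λ' ^ |k| * dist x y)
    (hlip2 : ∀ k : ℤ, |k| < (n₀ : ℤ) → ∀ x y : M,
      dist ((T ^ k) x) ((T ^ k) y) ≤ L ^ |k| * dist x y)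
    (k : ℤ) (x y : M) :
    dist ((T ^ k) x) ((T ^ k) y) ≤ L ^ n₀ * Λ' ^ |k| * dist x y := by
  have hLn₀ : 1 ≤ L ^ n₀ := one_le_pow₀ hL
  have hΛk : 1 ≤ Λ' ^ |k| := one_le_zpow₀ hΛ' (abs_nonneg k)
  rcases le_or_gt (n₀ : ℤ) |k| with h | h
  · refine (hlip1 k h x y).trans (mul_le_mul_of_nonneg_right ?_ dist_nonneg)
    exact le_mul_of_one_le_left (by positivity) hLn₀
  · refine (hlip2 k h x y).trans (mul_le_mul_of_nonneg_right ?_ dist_nonneg)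
    calc L ^ |k| ≤ L ^ (n₀ : ℤ) := zpow_le_zpow_right₀ hL h.le
      _ = L ^ n₀ := zpow_natCast L n₀
      _ ≤ L ^ n₀ * Λ' ^ |k| := le_mul_of_one_le_right (by positivity) hΛk

lemma zpow_abs_le_rpow_half {Λ : ℝ} (hΛ : 1 ≤ Λ) {k : ℤ} {n : ℕ} (h : 2 * |k| ≤ n) :
    Λ ^ |k| ≤ Λ ^ ((n : ℝ) / 2) := by
  rw [← Real.rpow_intCast]
  refine Real.rpow_le_rpow_of_exponent_le hΛ ?_
  have : (2 * |k| : ℤ) ≤ (n : ℝ) := by exact_mod_cast h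
  push_cast at this ⊢
  linarith

/-- Lower bound on the distance between distinct periodic points of period `n`,
for an expansive bijection whose iterates `T^k` are Lipschitz with constant `Λ'^{|k|}`
for `|k| ≥ n₀` and `L^{|k|}` for `|k| < n₀`. -/
theorem stmt_2 {M : Type*} [MetricSpace M] (T : Equiv.Perm M)
    (δ : ℝ) (hδ : 0 < δ)
    (hexp : ∀ x y : M, x ≠ y → ∃ k : ℤ, δ < dist ((T ^ k) x) ((T ^ k) y))
    (Λ' L : ℝ) (hΛ' : 1 < Λ') (hL : Λ' ≤ L) (n₀ : ℕ)
    (hlip1 : ∀ k : ℤ, (n₀ : ℤ) ≤ |k| → ∀ x y : M,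
      dist ((T ^ k) x) ((T ^ k) y) ≤ Λ' ^ |k| * dist x y)
    (hlip2 : ∀ k : ℤ, |k| < (n₀ : ℤ) → ∀ x y : M,
      dist ((T ^ k) x) ((T ^ k) y) ≤ L ^ |k| * dist x y) :
    ∃ C : ℝ, 0 < C ∧ ∀ n : ℕ, 1 ≤ n → ∀ x y : M, x ≠ y →
      (T ^ (n : ℤ)) x = x → (T ^ (n : ℤ)) y = y →
      C * Λ' ^ (-(n : ℝ) / 2) ≤ dist x y := by
  have hL₁ : 1 ≤ L := hΛ'.le.trans hL
  refine ⟨δ / L ^ n₀, by positivity, fun n hn x y hxy hx hy => ?_⟩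
  obtain ⟨k, hk, hδk⟩ := exists_two_mul_abs_le_and_lt_dist_of_periodic hexp hn hxy hx hy
  have hδ_le : δ ≤ L ^ n₀ * Λ' ^ ((n : ℝ) / 2) * dist x y :=
    calc δ ≤ dist ((T ^ k) x) ((T ^ k) y) := hδk.le
      _ ≤ L ^ n₀ * Λ' ^ |k| * dist x y := dist_zpow_apply_le hΛ'.le hL₁ hlip1 hlip2 k x y
      _ ≤ L ^ n₀ * Λ' ^ ((n : ℝ) / 2) * dist x y := by
        gcongr
        exact zpow_abs_le_rpow_half hΛ'.le hk
  have hΛn : 0 < Λ' ^ ((n : ℝ) / 2) := by positivity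
  rw [neg_div, Real.rpow_neg (by positivity), div_mul_eq_mul_div, div_le_iff₀ (by positivity),
    mul_inv_le_iff₀ hΛn]
  linarith
end

section
/- Let d ≥ 1 be an integer, α > 0, γ > 0, 0 < r < 1, C > 0 and κ > 0. Let χ : (0,∞) → [0,∞) satisfy χ(x) ≤ C x^{−dα} for all x > 0, and let (λ_k)_{k≥1} be positive reals with λ_k ≥ κ k^{2/d} for all k ≥ 1. Set h_j := r^j and define c'_k² := Σ_{j≥1} h_j^{2dα+2γ} χ(h_j² λ_k). Then there exists C' > 0 such that c'_k² ≤ C' k^{−2α} for all k ≥ 1; in particular c'_k = O(k^{−α}). -/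
/-! With `h = r ^ (j + 1)` and `L = lam k`, the decay `χ x ≤ C x ^ (-dα)` makes the `j`-th term at
most `C L ^ (-dα) h ^ (2γ)`: the factor `h ^ (2dα)` is cancelled exactly, and what is left is a
geometric series of ratio `r ^ (2γ) < 1`. Weyl's law `κ k ^ (2/d) ≤ L` then turns `L ^ (-dα)` into
`κ ^ (-dα) k ^ (-2α)`. -/

open Real

theorem tsum_le_of_le_geometric {f : ℕ → ℝ} {A ρ : ℝ} (hf0 : ∀ j, 0 ≤ f j)
    (hf : ∀ j, f j ≤ A * ρ ^ (j + 1)) (hρ0 : 0 ≤ ρ) (hρ1 : ρ < 1) :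
    ∑' j, f j ≤ A * ρ / (1 - ρ) := by
  have hgeom : HasSum (fun j : ℕ => A * ρ ^ (j + 1)) (A * ρ / (1 - ρ)) := by
    have := ((hasSum_geometric_of_lt_one hρ0 hρ1).mul_left (A * ρ))
    simpa only [pow_succ', ← mul_assoc, mul_div_assoc, div_eq_mul_inv] using this
  exact (Summable.tsum_le_tsum hf (hgeom.summable.of_nonneg_of_le hf0 hf) hgeom.summable).trans
    hgeom.tsum_eq.le

theorem rpow_mul_le_of_le_rpow_neg {a b C h L y : ℝ} (hh : 0 < h) (hL : 0 < L)
    (hy : y ≤ C * (h ^ 2 * L) ^ (-a)) :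
    h ^ (2 * a + b) * y ≤ C * L ^ (-a) * h ^ b := by
  have hsq : (h ^ 2) ^ (-a) = h ^ (-(2 * a)) := by
    rw [← rpow_natCast, ← rpow_mul hh.le]
    ring_nf
  calc h ^ (2 * a + b) * y ≤ h ^ (2 * a + b) * (C * (h ^ 2 * L) ^ (-a)) :=
        mul_le_mul_of_nonneg_left hy (rpow_nonneg hh.le _)
    _ = C * L ^ (-a) * (h ^ (2 * a + b) * h ^ (-(2 * a))) := by
        rw [mul_rpow (by positivity) hL.le, hsq]
        ring
    _ = C * L ^ (-a) * h ^ b := by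
        rw [← rpow_add hh]
        ring_nf

theorem rpow_neg_le_of_weyl {d α κ k L : ℝ} (hd : 0 < d) (hα : 0 ≤ α) (hκ : 0 < κ) (hk : 0 < k)
    (hL : κ * k ^ (2 / d) ≤ L) :
    L ^ (-(d * α)) ≤ κ ^ (-(d * α)) * k ^ (-2 * α) := by
  calc L ^ (-(d * α)) ≤ (κ * k ^ (2 / d)) ^ (-(d * α)) :=
        rpow_le_rpow_of_nonpos (by positivity) hL (neg_nonpos.2 (by positivity))
    _ = κ ^ (-(d * α)) * k ^ (-2 * α) := by
        rw [mul_rpow hκ.le (by positivity), ← rpow_mul hk.le]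
        congr 2
        field_simp

theorem stmt_4_general (d : ℕ) (hd : 1 ≤ d) (α γ r C κ : ℝ)
    (hα : 0 < α) (hγ : 0 < γ) (hr0 : 0 < r) (hr1 : r < 1) (hC : 0 < C) (hκ : 0 < κ)
    (χ : ℝ → ℝ) (hχ0 : ∀ x : ℝ, 0 < x → 0 ≤ χ x)
    (hχ : ∀ x : ℝ, 0 < x → χ x ≤ C * x ^ (-((d : ℝ) * α)))
    (lam : ℕ → ℝ)
    (hlam : ∀ k : ℕ, 1 ≤ k → κ * (k : ℝ) ^ (2 / (d : ℝ)) ≤ lam k) :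
    ∃ C' : ℝ, 0 < C' ∧ ∀ k : ℕ, 1 ≤ k →
      (∑' j : ℕ, (r ^ (j + 1)) ^ (2 * (d : ℝ) * α + 2 * γ) * χ ((r ^ (j + 1)) ^ 2 * lam k))
        ≤ C' * (k : ℝ) ^ (-2 * α) := by
  set ρ := r ^ (2 * γ)
  have hρ0 : 0 < ρ := rpow_pos_of_pos hr0 _
  have hρ1 : ρ < 1 := rpow_lt_one hr0.le hr1 (by positivity)
  have hd0 : (0 : ℝ) < d := by exact_mod_cast hd
  refine ⟨C * κ ^ (-((d : ℝ) * α)) * (ρ / (1 - ρ)), by have := sub_pos.2 hρ1; positivity, ?_⟩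
  intro k hk
  have hk0 : (0 : ℝ) < k := by exact_mod_cast hk
  have hL : 0 < lam k := (by positivity : 0 < κ * (k : ℝ) ^ (2 / (d : ℝ))).trans_le (hlam k hk)
  have hsum := tsum_le_of_le_geometric
    (f := fun j => (r ^ (j + 1)) ^ (2 * (d : ℝ) * α + 2 * γ) * χ ((r ^ (j + 1)) ^ 2 * lam k))
    (fun j => mul_nonneg (rpow_nonneg (pow_pos hr0 _).le _) (hχ0 _ (by positivity)))
    (fun j => by
      rw [show ρ ^ (j + 1) = (r ^ (j + 1)) ^ (2 * γ) from rpow_pow_comm hr0.le _ _,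
        mul_assoc 2 (d : ℝ) α]
      exact rpow_mul_le_of_le_rpow_neg (pow_pos hr0 _) hL (hχ _ (by positivity)))
    hρ0.le hρ1
  have hweyl := rpow_neg_le_of_weyl hd0 hα.le hκ hk0 (hlam k hk)
  calc _ ≤ C * lam k ^ (-((d : ℝ) * α)) * ρ / (1 - ρ) := hsum
    _ ≤ C * (κ ^ (-((d : ℝ) * α)) * (k : ℝ) ^ (-2 * α)) * ρ / (1 - ρ) := by gcongr
    _ = _ := by ring

/-- Coefficient estimate: if `χ(x) ≤ C x^{-dα}`, `λ_k ≥ κ k^{2/d}` and `h_j = r^j` with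
`0 < r < 1`, then `c'_k² := Σ_{j≥1} h_j^{2dα+2γ} χ(h_j² λ_k) = O(k^{-2α})`. -/
theorem stmt_4 (d : ℕ) (hd : 1 ≤ d) (α γ r C κ : ℝ)
    (hα : 0 < α) (hγ : 0 < γ) (hr0 : 0 < r) (hr1 : r < 1) (hC : 0 < C) (hκ : 0 < κ)
    (χ : ℝ → ℝ) (hχ0 : ∀ x : ℝ, 0 < x → 0 ≤ χ x)
    (hχ : ∀ x : ℝ, 0 < x → χ x ≤ C * x ^ (-((d : ℝ) * α)))
    (lam : ℕ → ℝ) (hlampos : ∀ k : ℕ, 1 ≤ k → 0 < lam k)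
    (hlam : ∀ k : ℕ, 1 ≤ k → κ * (k : ℝ) ^ (2 / (d : ℝ)) ≤ lam k) :
    ∃ C' : ℝ, 0 < C' ∧ ∀ k : ℕ, 1 ≤ k →
      (∑' j : ℕ, (r ^ (j + 1)) ^ (2 * (d : ℝ) * α + 2 * γ) * χ ((r ^ (j + 1)) ^ 2 * lam k))
        ≤ C' * (k : ℝ) ^ (-2 * α) :=
  stmt_4_general d hd α γ r C κ hα hγ hr0 hr1 hC hκ χ hχ0 hχ lam hlam
end

section
/- Let N be a positive integer and ξ > 0. For k ∈ ℤ^N let H_k := ∏_{i=1}^N [2πk_i/ξ, 2π(k_i+1)/ξ] ⊆ ℝ^N. Let g : ℝ^N → ℝ be continuously differentiable and Lebesgue integrable, and assume that the family (sup_{x∈H_k} ‖∇g(x)‖)_{k∈ℤ^N} is summable and that the family (g(2πk/ξ))_{k∈ℤ^N} is summable. Then |(2π/ξ)^N Σ_{k∈ℤ^N} g(2πk/ξ) − ∫_{ℝ^N} g(x) dx| ≤ 2π (√N/ξ) Σ_{k∈ℤ^N} (2π/ξ)^N sup_{x∈H_k} ‖∇g(x)‖. -/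
/-!
The half-open cubes `∏ᵢ [2πkᵢ/ξ, 2π(kᵢ+1)/ξ)` tile `ℝ^N`, each with volume `(2π/ξ)^N`, so `∫ g` is
the sum of the integrals of `g` over them. On the closed cube `H_k`, which is convex, the mean value
theorem bounds `|g x - g (2πk/ξ)|` by `sup_{H_k} ‖∇g‖` times the diameter `2π√N/ξ`; integrating
over the cube and summing over `k` gives the estimate.
-/

open MeasureTheory Filter Real

def cube (N : ℕ) (ξ : ℝ) (k : Fin N → ℤ) : Set (EuclideanSpace ℝ (Fin N)) :=
  {x | ∀ i, x i ∈ Set.Icc (2 * π * (k i : ℝ) / ξ) (2 * π * ((k i : ℝ) + 1) / ξ)}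

lemma le_biSup_of_bddAbove_image {α β : Type*} [ConditionallyCompleteLattice α] {f : β → α}
    {s : Set β} (H : BddAbove (f '' s)) {c : β} (hc : c ∈ s) : f c ≤ ⨆ x ∈ s, f x :=
  le_ciSup₂ (f := fun x (_ : x ∈ s) => f x)
    (H.mono <| by rintro _ ⟨_, ⟨x, rfl⟩, ⟨hx, rfl⟩⟩; exact ⟨x, hx, rfl⟩) c hc

lemma norm_gradient_eq_norm_fderiv {E : Type*} [NormedAddCommGroup E] [InnerProductSpace ℝ E]
    [CompleteSpace E] (g : E → ℝ) (x : E) : ‖gradient g x‖ = ‖fderiv ℝ g x‖ :=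
  (InnerProductSpace.toDual ℝ E).symm.norm_map _

lemma EuclideanSpace.norm_le_sqrt_card_mul {ι : Type*} [Fintype ι] {x : EuclideanSpace ℝ ι}
    {r : ℝ} (hr : 0 ≤ r) (hx : ∀ i, |x i| ≤ r) : ‖x‖ ≤ √(Fintype.card ι) * r := by
  rw [EuclideanSpace.norm_eq, ← Real.sqrt_sq hr, ← Real.sqrt_mul (Nat.cast_nonneg _)]
  gcongr
  calc ∑ i, ‖x i‖ ^ 2 ≤ ∑ _i : ι, r ^ 2 := by
        gcongr with i
        rw [Real.norm_eq_abs]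
        exact hx i
    _ = Fintype.card ι * r ^ 2 := by simp

lemma abs_measureReal_mul_sub_setIntegral_le {E : Type*} [NormedAddCommGroup E]
    [NormedSpace ℝ E] [MeasurableSpace E] {μ : Measure E} {g : E → ℝ} {s t : Set E} {c : E}
    {C d : ℝ} (hs : Convex ℝ s) (hts : t ⊆ s) (hc : c ∈ s) (ht : μ t ≠ ⊤)
    (hgt : IntegrableOn g t μ) (hg : ∀ x ∈ s, DifferentiableAt ℝ g x)
    (hC : ∀ x ∈ s, ‖fderiv ℝ g x‖ ≤ C) (hd : ∀ x ∈ s, ‖x - c‖ ≤ d) :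
    |μ.real t * g c - ∫ x in t, g x ∂μ| ≤ μ.real t * (C * d) := by
  have hC0 : 0 ≤ C := (norm_nonneg _).trans (hC c hc)
  have hpoint : ∀ x ∈ t, ‖g c - g x‖ ≤ C * d := fun x hx =>
    (hs.norm_image_sub_le_of_norm_fderiv_le hg hC (hts hx) hc).trans
      (mul_le_mul_of_nonneg_left ((norm_sub_rev _ _).trans_le (hd x (hts hx))) hC0)
  have hsub : μ.real t * g c - ∫ x in t, g x ∂μ = ∫ x in t, (g c - g x) ∂μ := by
    rw [integral_sub (integrableOn_const (C := g c) ht) hgt, setIntegral_const, smul_eq_mul]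
  rw [hsub, ← Real.norm_eq_abs, mul_comm]
  exact norm_setIntegral_le_of_norm_le_const ht.lt_top hpoint

lemma abs_tsum_sub_integral_le_of_partition {ι α : Type*} [Countable ι] [MeasurableSpace α]
    {μ : Measure α} {t : ι → Set α} (htm : ∀ i, MeasurableSet (t i))
    (htd : Pairwise (Function.onFun Disjoint t)) (htu : ⋃ i, t i = Set.univ) {g : α → ℝ}
    (hg : Integrable g μ) {a b : ι → ℝ} (hb : Summable b)
    (hab : ∀ i, |a i - ∫ x in t i, g x ∂μ| ≤ b i) :
    |∑' i, a i - ∫ x, g x ∂μ| ≤ ∑' i, b i := by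
  have hpieces : HasSum (fun i => ∫ x in t i, g x ∂μ) (∫ x, g x ∂μ) := by
    simpa [htu] using hasSum_integral_iUnion htm htd (by rw [htu]; exact hg.integrableOn)
  have herr : Summable fun i => a i - ∫ x in t i, g x ∂μ :=
    hb.of_norm_bounded fun i => (Real.norm_eq_abs _).trans_le (hab i)
  have ha : Summable a := by simpa using herr.add hpieces.summable
  rw [← hpieces.tsum_eq, ← ha.tsum_sub hpieces.summable, ← Real.norm_eq_abs]
  exact tsum_of_norm_bounded hb.hasSum fun i => (Real.norm_eq_abs _).trans_le (hab i)

def halfOpenCube (N : ℕ) (ξ : ℝ) (k : Fin N → ℤ) : Set (EuclideanSpace ℝ (Fin N)) :=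
  {x | ∀ i, x i ∈ Set.Ico (2 * π * (k i : ℝ) / ξ) (2 * π * ((k i : ℝ) + 1) / ξ)}

noncomputable def cubeIndex (N : ℕ) (ξ : ℝ) (x : EuclideanSpace ℝ (Fin N)) : Fin N → ℤ :=
  fun i => ⌊x i * ξ / (2 * π)⌋

section Cubes

variable {N : ℕ} {ξ : ℝ}

lemma mem_Ico_iff_floor_eq (hξ : 0 < ξ) (m : ℤ) (y : ℝ) :
    y ∈ Set.Ico (2 * π * (m : ℝ) / ξ) (2 * π * ((m : ℝ) + 1) / ξ) ↔ ⌊y * ξ / (2 * π)⌋ = m := by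
  have h2π : (0 : ℝ) < 2 * π := by positivity
  rw [Int.floor_eq_iff, Set.mem_Ico, div_le_iff₀ hξ, lt_div_iff₀ hξ, le_div_iff₀ h2π,
    div_lt_iff₀ h2π]
  constructor <;> rintro ⟨h1, h2⟩ <;> constructor <;> nlinarith

lemma halfOpenCube_eq_fiber_cubeIndex (hξ : 0 < ξ) :
    halfOpenCube N ξ = fun k => cubeIndex N ξ ⁻¹' {k} := by
  ext k x
  simp only [halfOpenCube, cubeIndex, Set.mem_ofPred_eq, Set.mem_preimage, Set.mem_singleton_iff,
    funext_iff, mem_Ico_iff_floor_eq hξ]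

lemma pairwise_disjoint_halfOpenCube (hξ : 0 < ξ) :
    Pairwise (Function.onFun Disjoint (halfOpenCube N ξ)) := by
  rw [halfOpenCube_eq_fiber_cubeIndex hξ]
  exact pairwise_disjoint_fiber (cubeIndex N ξ)

lemma iUnion_halfOpenCube (hξ : 0 < ξ) : ⋃ k, halfOpenCube N ξ k = Set.univ := by
  rw [halfOpenCube_eq_fiber_cubeIndex hξ, ← Set.preimage_iUnion, Set.iUnion_of_singleton,
    Set.preimage_univ]

lemma halfOpenCube_eq_preimage_pi (k : Fin N → ℤ) :
    halfOpenCube N ξ k = WithLp.ofLp ⁻¹'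
      Set.univ.pi fun i => Set.Ico (2 * π * (k i : ℝ) / ξ) (2 * π * ((k i : ℝ) + 1) / ξ) := by
  ext x
  simp [halfOpenCube]

lemma measurableSet_halfOpenCube (k : Fin N → ℤ) : MeasurableSet (halfOpenCube N ξ k) := by
  rw [halfOpenCube_eq_preimage_pi]
  exact WithLp.measurable_ofLp 2 _ (MeasurableSet.univ_pi fun _ => measurableSet_Ico)

lemma volume_halfOpenCube (hξ : 0 < ξ) (k : Fin N → ℤ) :
    volume (halfOpenCube N ξ k) = ENNReal.ofReal ((2 * π / ξ) ^ N) := by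
  rw [halfOpenCube_eq_preimage_pi, (PiLp.volume_preserving_ofLp (Fin N)).measure_preimage
    (MeasurableSet.univ_pi fun _ => measurableSet_Ico).nullMeasurableSet, Real.volume_pi_Ico,
    ENNReal.ofReal_pow (by positivity)]
  simp_rw [show ∀ m : ℝ, 2 * π * (m + 1) / ξ - 2 * π * m / ξ = 2 * π / ξ by intro m; ring]
  simp

lemma halfOpenCube_subset_cube (k : Fin N → ℤ) : halfOpenCube N ξ k ⊆ cube N ξ k :=
  fun _ hx i => Set.Ico_subset_Icc_self (hx i)

lemma convex_cube (k : Fin N → ℤ) : Convex ℝ (cube N ξ k) :=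
  fun _ hx _ hy _ _ ha hb hab i => convex_Icc _ _ (hx i) (hy i) ha hb hab

lemma isCompact_cube (k : Fin N → ℤ) : IsCompact (cube N ξ k) := by
  have : cube N ξ k = (EuclideanSpace.equiv (Fin N) ℝ).toHomeomorph ⁻¹'
      Set.univ.pi fun i => Set.Icc (2 * π * (k i : ℝ) / ξ) (2 * π * ((k i : ℝ) + 1) / ξ) := by
    ext x
    simp only [cube, Set.mem_preimage, Set.mem_univ_pi, Set.mem_ofPred_eq]
    rfl
  rw [this, Homeomorph.isCompact_preimage]
  exact isCompact_univ_pi fun _ => isCompact_Icc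

lemma latticePoint_mem_cube (hξ : 0 < ξ) (k : Fin N → ℤ) :
    (EuclideanSpace.equiv (Fin N) ℝ).symm (fun i => 2 * π * (k i : ℝ) / ξ) ∈ cube N ξ k :=
  fun i => ⟨le_rfl, div_le_div_of_nonneg_right (by nlinarith [pi_pos]) hξ.le⟩

lemma norm_sub_le_of_mem_cube (hξ : 0 < ξ) {k : Fin N → ℤ} {x y : EuclideanSpace ℝ (Fin N)}
    (hx : x ∈ cube N ξ k) (hy : y ∈ cube N ξ k) : ‖x - y‖ ≤ √N * (2 * π / ξ) := by
  simpa using EuclideanSpace.norm_le_sqrt_card_mul (x := x - y) (by positivity) fun i =>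
    (Real.dist_le_of_mem_Icc (hx i) (hy i)).trans_eq (by field_simp; ring)

lemma norm_fderiv_le_biSup_norm_gradient_cube {g : EuclideanSpace ℝ (Fin N) → ℝ}
    (hg : ContDiff ℝ 1 g) (k : Fin N → ℤ) {x : EuclideanSpace ℝ (Fin N)} (hx : x ∈ cube N ξ k) :
    ‖fderiv ℝ g x‖ ≤ ⨆ y ∈ cube N ξ k, ‖gradient g y‖ := by
  have hcont : Continuous fun y => ‖gradient g y‖ := by
    simpa only [norm_gradient_eq_norm_fderiv] using (hg.continuous_fderiv one_ne_zero).norm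
  rw [← norm_gradient_eq_norm_fderiv]
  exact le_biSup_of_bddAbove_image ((isCompact_cube k).bddAbove_image hcont.continuousOn) hx

end Cubes

theorem stmt_5_general (N : ℕ) (ξ : ℝ) (hξ : 0 < ξ)
    (g : EuclideanSpace ℝ (Fin N) → ℝ) (hg : ContDiff ℝ 1 g) (hgint : Integrable g)
    (hsum1 : Summable (fun k : Fin N → ℤ => ⨆ x ∈ cube N ξ k, ‖gradient g x‖)) :
    |(2 * π / ξ) ^ N * (∑' k : Fin N → ℤ,
        g ((EuclideanSpace.equiv (Fin N) ℝ).symm (fun i => 2 * π * (k i : ℝ) / ξ)))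
      - ∫ x, g x|
    ≤ 2 * π * (Real.sqrt N / ξ) *
        ∑' k : Fin N → ℤ, (2 * π / ξ) ^ N * ⨆ x ∈ cube N ξ k, ‖gradient g x‖ := by
  have hvol := volume_halfOpenCube (N := N) hξ
  have hvolReal (k : Fin N → ℤ) : volume.real (halfOpenCube N ξ k) = (2 * π / ξ) ^ N := by
    rw [measureReal_def, hvol, ENNReal.toReal_ofReal (by positivity)]
  have hcell (k : Fin N → ℤ) :
      |(2 * π / ξ) ^ N * g ((EuclideanSpace.equiv (Fin N) ℝ).symm (fun i => 2 * π * (k i : ℝ) / ξ))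
        - ∫ x in halfOpenCube N ξ k, g x|
      ≤ (2 * π / ξ) ^ N * (⨆ x ∈ cube N ξ k, ‖gradient g x‖) * (√N * (2 * π / ξ)) := by
    rw [← hvolReal k, mul_assoc]
    exact abs_measureReal_mul_sub_setIntegral_le (convex_cube k) (halfOpenCube_subset_cube k)
      (latticePoint_mem_cube hξ k) (hvol k ▸ ENNReal.ofReal_ne_top) hgint.integrableOn
      (fun _ _ => (hg.differentiable one_ne_zero).differentiableAt)
      (fun _ hx => norm_fderiv_le_biSup_norm_gradient_cube hg k hx)
      (fun _ hx => norm_sub_le_of_mem_cube hξ hx (latticePoint_mem_cube hξ k))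
  rw [← tsum_mul_left]
  refine (abs_tsum_sub_integral_le_of_partition measurableSet_halfOpenCube
    (pairwise_disjoint_halfOpenCube hξ) (iUnion_halfOpenCube hξ) hgint
    ((hsum1.mul_left _).mul_right _) hcell).trans_eq ?_
  rw [tsum_mul_right]
  ring

/-- Riemann-sum estimate: the difference between `(2π/ξ)^N Σ_k g(2πk/ξ)` and `∫ g` is
bounded by `2π √N/ξ Σ_k (2π/ξ)^N sup_{H_k} ‖∇g‖`. -/
theorem stmt_5 (N : ℕ) (hN : 0 < N) (ξ : ℝ) (hξ : 0 < ξ)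
    (g : EuclideanSpace ℝ (Fin N) → ℝ) (hg : ContDiff ℝ 1 g) (hgint : Integrable g)
    (hsum1 : Summable (fun k : Fin N → ℤ => ⨆ x ∈ cube N ξ k, ‖gradient g x‖))
    (hsum2 : Summable (fun k : Fin N → ℤ =>
      g ((EuclideanSpace.equiv (Fin N) ℝ).symm (fun i => 2 * π * (k i : ℝ) / ξ)))) :
    |(2 * π / ξ) ^ N * (∑' k : Fin N → ℤ,
        g ((EuclideanSpace.equiv (Fin N) ℝ).symm (fun i => 2 * π * (k i : ℝ) / ξ)))
      - ∫ x, g x|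
    ≤ 2 * π * (Real.sqrt N / ξ) *
        ∑' k : Fin N → ℤ, (2 * π / ξ) ^ N * ⨆ x ∈ cube N ξ k, ‖gradient g x‖ :=
  stmt_5_general N ξ hξ g hg hgint hsum1
end

section
/- For each n ∈ ℕ let I_n be a nonempty finite index set and let (a_{n,i})_{i∈I_n} be nonnegative reals with Σ_{i∈I_n} a_{n,i}² = 1, and suppose max_{i∈I_n} a_{n,i} → 0 as n → ∞. Then for every (μ, ν) ∈ ℝ², ∏_{i∈I_n} (1/(2π)) ∫_0^{2π} exp(i a_{n,i} (μ cos t + ν sin t)) dt → exp(−(μ² + ν²)/4) as n → ∞. -/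
/-!
Each factor is `φ(a μ, a ν)`, where `φ` is the characteristic function of the uniform
distribution on the unit circle. That distribution has mean `0` and covariance `½ Id`, so the
second-order Taylor expansion gives `φ(x, y) = 1 - (x² + y²)/4 + O((|x| + |y|)³)`, hence
`φ(a μ, a ν) = exp (-a² (μ² + ν²)/4) + O(a³)`. Since `Σ a² = 1` the Gaussian factors multiply
to `exp (-(μ² + ν²)/4)`, and as all factors have modulus at most `1`, the two products differ
by at most `Σ O(a³) ≤ O(max a) → 0`.
-/

open Real Filter

section

open Complex (I)

lemma norm_exp_I_mul_sub_taylor_le {x : ℝ} (hx : |x| ≤ 1) :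
    ‖Complex.exp (I * x) - (1 + I * x - (x : ℂ) ^ 2 / 2)‖ ≤ |x| ^ 3 := by
  have hIx : ‖I * (x : ℂ)‖ = |x| := by simp
  have h := Complex.exp_bound (hIx.le.trans hx) (n := 3) (by norm_num)
  have htaylor : ∑ m ∈ Finset.range 3, (I * (x : ℂ)) ^ m / m.factorial
      = 1 + I * x - (x : ℂ) ^ 2 / 2 := by
    simp only [Finset.sum_range_succ, Finset.sum_range_zero, Nat.factorial, mul_pow, Complex.I_sq]
    push_cast
    ring
  rw [htaylor, hIx] at h
  norm_num [Nat.factorial] at h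
  nlinarith [pow_nonneg (abs_nonneg x) 3]

lemma norm_prod_sub_prod_le_sum_norm_sub {ι R : Type*} [NormedCommRing R] [NormOneClass R]
    (s : Finset ι) {z w : ι → R} (hz : ∀ i ∈ s, ‖z i‖ ≤ 1) (hw : ∀ i ∈ s, ‖w i‖ ≤ 1) :
    ‖∏ i ∈ s, z i - ∏ i ∈ s, w i‖ ≤ ∑ i ∈ s, ‖z i - w i‖ := by
  classical
  induction s using Finset.induction_on with
  | empty => simp
  | insert j s hj ih =>
    simp only [Finset.forall_mem_insert] at hz hw
    have hws : ‖∏ i ∈ s, w i‖ ≤ 1 :=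
      (Finset.norm_prod_le s w).trans
        (Finset.prod_le_one (fun _ _ => norm_nonneg _) hw.2)
    rw [Finset.prod_insert hj, Finset.prod_insert hj, Finset.sum_insert hj]
    calc ‖z j * ∏ i ∈ s, z i - w j * ∏ i ∈ s, w i‖
        = ‖z j * (∏ i ∈ s, z i - ∏ i ∈ s, w i) + (z j - w j) * ∏ i ∈ s, w i‖ := by
          congr 1; ring
      _ ≤ ‖z j‖ * ‖∏ i ∈ s, z i - ∏ i ∈ s, w i‖ + ‖z j - w j‖ * ‖∏ i ∈ s, w i‖ :=
        (norm_add_le _ _).trans (add_le_add (norm_mul_le _ _) (norm_mul_le _ _))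
      _ ≤ 1 * ∑ i ∈ s, ‖z i - w i‖ + ‖z j - w j‖ * 1 := by
        gcongr
        exacts [hz.1, ih hz.2 hw.2]
      _ = ‖z j - w j‖ + ∑ i ∈ s, ‖z i - w i‖ := by ring

lemma integral_mul_cos_add_mul_sin (x y : ℝ) :
    ∫ t in (0 : ℝ)..(2 * π), (x * cos t + y * sin t) = 0 := by
  rw [intervalIntegral.integral_add ((by fun_prop : Continuous _).intervalIntegrable _ _)
      ((by fun_prop : Continuous _).intervalIntegrable _ _),
    intervalIntegral.integral_const_mul, intervalIntegral.integral_const_mul,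
    integral_cos, integral_sin]
  simp

lemma integral_mul_cos_add_mul_sin_sq (x y : ℝ) :
    ∫ t in (0 : ℝ)..(2 * π), (x * cos t + y * sin t) ^ 2 = π * (x ^ 2 + y ^ 2) := by
  have hexpand : ∀ t, (x * cos t + y * sin t) ^ 2
      = x ^ 2 * cos t ^ 2 + (y ^ 2 * sin t ^ 2 + 2 * x * y * (sin t * cos t)) := fun t => by ring
  simp_rw [hexpand]
  rw [intervalIntegral.integral_add ((by fun_prop : Continuous _).intervalIntegrable _ _)
      ((by fun_prop : Continuous _).intervalIntegrable _ _),
    intervalIntegral.integral_add ((by fun_prop : Continuous _).intervalIntegrable _ _)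
      ((by fun_prop : Continuous _).intervalIntegrable _ _),
    intervalIntegral.integral_const_mul, intervalIntegral.integral_const_mul,
    intervalIntegral.integral_const_mul, integral_cos_sq, integral_sin_sq, integral_sin_mul_cos₁]
  simp
  ring

lemma integral_exp_taylor_circle (x y : ℝ) :
    ∫ t in (0 : ℝ)..(2 * π), (1 + I * ((x * cos t + y * sin t : ℝ) : ℂ)
      - ((x * cos t + y * sin t : ℝ) : ℂ) ^ 2 / 2)
      = ((2 * π - π * (x ^ 2 + y ^ 2) / 2 : ℝ) : ℂ) := by
  have hsplit : ∀ t : ℝ, 1 + I * ((x * cos t + y * sin t : ℝ) : ℂ)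
      - ((x * cos t + y * sin t : ℝ) : ℂ) ^ 2 / 2
      = ((1 - (x * cos t + y * sin t) ^ 2 / 2 : ℝ) : ℂ) + I * ((x * cos t + y * sin t : ℝ) : ℂ) :=
    fun t => by push_cast; ring
  simp_rw [hsplit]
  rw [intervalIntegral.integral_add ((by fun_prop : Continuous _).intervalIntegrable _ _)
      ((by fun_prop : Continuous _).intervalIntegrable _ _),
    intervalIntegral.integral_const_mul, intervalIntegral.integral_ofReal,
    intervalIntegral.integral_ofReal, integral_mul_cos_add_mul_sin,
    intervalIntegral.integral_sub ((by fun_prop : Continuous _).intervalIntegrable _ _)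
      ((by fun_prop : Continuous _).intervalIntegrable _ _), intervalIntegral.integral_div,
    integral_one, integral_mul_cos_add_mul_sin_sq]
  push_cast
  ring

noncomputable def circleCharFun (x y : ℝ) : ℂ :=
  ((1 / (2 * π) : ℝ) : ℂ) * ∫ t in (0 : ℝ)..(2 * π),
    Complex.exp (I * ((x * cos t + y * sin t : ℝ) : ℂ))

lemma circleCharFun_mul_mul (a x y : ℝ) :
    circleCharFun (a * x) (a * y) = ((1 / (2 * π) : ℝ) : ℂ) * ∫ t in (0 : ℝ)..(2 * π),
      Complex.exp (I * ((a * (x * cos t + y * sin t) : ℝ) : ℂ)) := by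
  simp only [circleCharFun, mul_add, mul_assoc]

lemma norm_one_div_two_pi_mul_integral_le {f : ℝ → ℂ} {C : ℝ} (hf : ∀ t, ‖f t‖ ≤ C) :
    ‖((1 / (2 * π) : ℝ) : ℂ) * ∫ t in (0 : ℝ)..(2 * π), f t‖ ≤ C := by
  have hint := intervalIntegral.norm_integral_le_of_norm_le_const (a := 0) (b := 2 * π)
    fun t _ => hf t
  rw [sub_zero, abs_of_pos two_pi_pos] at hint
  rw [norm_mul, Complex.norm_real, Real.norm_of_nonneg (by positivity)]
  calc 1 / (2 * π) * ‖∫ t in (0 : ℝ)..(2 * π), f t‖ ≤ 1 / (2 * π) * (C * (2 * π)) := by gcongr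
    _ = C := by field_simp

lemma norm_circleCharFun_le_one (x y : ℝ) : ‖circleCharFun x y‖ ≤ 1 :=
  norm_one_div_two_pi_mul_integral_le fun _ => (Complex.norm_exp_I_mul_ofReal _).le

lemma norm_circleCharFun_sub_taylor_le {x y : ℝ} (hxy : |x| + |y| ≤ 1) :
    ‖circleCharFun x y - ((1 - (x ^ 2 + y ^ 2) / 4 : ℝ) : ℂ)‖ ≤ (|x| + |y|) ^ 3 := by
  set g : ℝ → ℝ := fun t => x * cos t + y * sin t
  have hg : ∀ t, |g t| ≤ |x| + |y| := fun t => by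
    calc |g t| ≤ |x| * |cos t| + |y| * |sin t| := by
          simpa only [abs_mul] using abs_add_le (x * cos t) (y * sin t)
      _ ≤ |x| * 1 + |y| * 1 := by
          gcongr
          exacts [abs_cos_le_one t, abs_sin_le_one t]
      _ = |x| + |y| := by ring
  have hdiff : circleCharFun x y - ((1 - (x ^ 2 + y ^ 2) / 4 : ℝ) : ℂ)
      = ((1 / (2 * π) : ℝ) : ℂ) * ∫ t in (0 : ℝ)..(2 * π),
          (Complex.exp (I * (g t : ℂ)) - (1 + I * (g t : ℂ) - (g t : ℂ) ^ 2 / 2)) := by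
    rw [intervalIntegral.integral_sub ((by fun_prop : Continuous _).intervalIntegrable _ _)
      ((by fun_prop : Continuous _).intervalIntegrable _ _), integral_exp_taylor_circle, mul_sub]
    congr 1
    rw [← Complex.ofReal_mul]
    congr 1
    field_simp
    ring
  rw [hdiff]
  refine norm_one_div_two_pi_mul_integral_le fun t =>
    (norm_exp_I_mul_sub_taylor_le ((hg t).trans hxy)).trans ?_
  gcongr
  exact hg t

lemma norm_circleCharFun_sub_exp_le {x y : ℝ} (hxy : |x| + |y| ≤ 1) :
    ‖circleCharFun x y - Complex.exp (-((x ^ 2 + y ^ 2 : ℝ) : ℂ) / 4)‖ ≤ 2 * (|x| + |y|) ^ 3 := by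
  set s := |x| + |y|
  set q := (x ^ 2 + y ^ 2) / 4
  have hq : 0 ≤ q := by positivity
  have hqs : q ≤ s ^ 2 := by
    simp only [q, s]
    nlinarith [sq_abs x, sq_abs y, abs_nonneg x, abs_nonneg y]
  have hs : 0 ≤ s := by positivity
  have hgauss : ‖((1 - q : ℝ) : ℂ) - Complex.exp (-((x ^ 2 + y ^ 2 : ℝ) : ℂ) / 4)‖ ≤ q ^ 2 := by
    have hexp : Complex.exp (-((x ^ 2 + y ^ 2 : ℝ) : ℂ) / 4) = ((Real.exp (-q) : ℝ) : ℂ) := by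
      rw [Complex.ofReal_exp]; congr 1; simp only [q]; push_cast; ring
    rw [hexp, ← Complex.ofReal_sub, Complex.norm_real, Real.norm_eq_abs, abs_sub_comm]
    have := Real.abs_exp_sub_one_sub_id_le (x := -q) (by rw [abs_neg, abs_of_nonneg hq]; nlinarith)
    rw [neg_sq] at this
    convert this using 2
    ring
  calc ‖circleCharFun x y - Complex.exp (-((x ^ 2 + y ^ 2 : ℝ) : ℂ) / 4)‖
      ≤ ‖circleCharFun x y - ((1 - q : ℝ) : ℂ)‖
        + ‖((1 - q : ℝ) : ℂ) - Complex.exp (-((x ^ 2 + y ^ 2 : ℝ) : ℂ) / 4)‖ :=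
        norm_sub_le_norm_sub_add_norm_sub _ _ _
    _ ≤ s ^ 3 + q ^ 2 := add_le_add (norm_circleCharFun_sub_taylor_le hxy) hgauss
    _ ≤ 2 * s ^ 3 := by
      nlinarith [pow_le_pow_left₀ hq hqs 2, pow_le_pow_of_le_one hs hxy (by norm_num : 3 ≤ 4)]

lemma norm_exp_neg_sq_add_sq_div_four_le_one (x y : ℝ) :
    ‖Complex.exp (-((x ^ 2 + y ^ 2 : ℝ) : ℂ) / 4)‖ ≤ 1 := by
  rw [Complex.norm_exp, Real.exp_le_one_iff]
  simp only [Complex.div_ofNat_re, Complex.neg_re, Complex.ofReal_re]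
  linarith [sq_nonneg x, sq_nonneg y]

lemma prod_exp_neg_sq_add_sq_div_four {ι : Type*} {s : Finset ι} {a : ι → ℝ}
    (ha : ∑ i ∈ s, a i ^ 2 = 1) (μ ν : ℝ) :
    ∏ i ∈ s, Complex.exp (-(((a i * μ) ^ 2 + (a i * ν) ^ 2 : ℝ) : ℂ) / 4)
      = Complex.exp (-((μ ^ 2 + ν ^ 2 : ℝ) : ℂ) / 4) := by
  have hsum : ∑ i ∈ s, ((a i * μ) ^ 2 + (a i * ν) ^ 2) = μ ^ 2 + ν ^ 2 := by
    simp only [mul_pow, ← mul_add, ← Finset.sum_mul, ha, one_mul]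
  rw [← Complex.exp_sum, ← hsum, Complex.ofReal_sum, ← Finset.sum_neg_distrib, Finset.sum_div]

lemma norm_circleCharFun_mul_sub_exp_le {a M μ ν : ℝ} (ha : 0 ≤ a) (haM : a ≤ M)
    (hM : M * (|μ| + |ν|) ≤ 1) :
    ‖circleCharFun (a * μ) (a * ν) - Complex.exp (-(((a * μ) ^ 2 + (a * ν) ^ 2 : ℝ) : ℂ) / 4)‖
      ≤ 2 * (|μ| + |ν|) ^ 3 * M * a ^ 2 := by
  have hr : 0 ≤ |μ| + |ν| := by positivity
  have habs : |a * μ| + |a * ν| = a * (|μ| + |ν|) := by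
    rw [abs_mul, abs_mul, abs_of_nonneg ha, mul_add]
  have har : a * (|μ| + |ν|) ≤ 1 := (mul_le_mul_of_nonneg_right haM hr).trans hM
  calc _ ≤ 2 * (a * (|μ| + |ν|)) ^ 3 := habs ▸ norm_circleCharFun_sub_exp_le (habs ▸ har)
    _ = 2 * (|μ| + |ν|) ^ 3 * a * a ^ 2 := by ring
    _ ≤ 2 * (|μ| + |ν|) ^ 3 * M * a ^ 2 := by gcongr

end

/-- If `(a_{n,i})_{i∈I_n}` are nonnegative with `Σ_{i∈I_n} a_{n,i}² = 1` and
`max_{i∈I_n} a_{n,i} → 0`, then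
`∏_{i∈I_n} (1/2π) ∫_0^{2π} e^{i a_{n,i}(μ cos t + ν sin t)} dt → e^{-(μ²+ν²)/4}`. -/
theorem stmt_17 {ι : Type*} (I : ℕ → Finset ι) (hne : ∀ n, (I n).Nonempty)
    (a : ℕ → ι → ℝ) (ha0 : ∀ n, ∀ i ∈ I n, 0 ≤ a n i)
    (hnorm : ∀ n, ∑ i ∈ I n, (a n i) ^ 2 = 1)
    (hmax : Tendsto (fun n => (I n).sup' (hne n) (a n)) atTop (nhds 0)) :
    ∀ μ ν : ℝ,
      Tendsto (fun n => ∏ i ∈ I n, (((1 / (2 * π) : ℝ) : ℂ) *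
          ∫ t in (0 : ℝ)..(2 * π),
            Complex.exp (Complex.I * ((a n i * (μ * Real.cos t + ν * Real.sin t) : ℝ) : ℂ))))
        atTop (nhds (Complex.exp (-(((μ ^ 2 + ν ^ 2 : ℝ) : ℂ)) / 4))) := by
  intro μ ν
  simp only [← circleCharFun_mul_mul]
  rw [← tendsto_sub_nhds_zero_iff]
  have hsmall : ∀ᶠ n in atTop, (I n).sup' (hne n) (a n) * (|μ| + |ν|) ≤ 1 := by
    have := hmax.mul_const (|μ| + |ν|)
    rw [zero_mul] at this
    exact this.eventually (eventually_le_nhds one_pos)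
  refine squeeze_zero_norm' ?_ (by simpa using hmax.const_mul (2 * (|μ| + |ν|) ^ 3))
  filter_upwards [hsmall] with n hn
  rw [← prod_exp_neg_sq_add_sq_div_four (hnorm n)]
  calc _ ≤ ∑ i ∈ I n, ‖circleCharFun (a n i * μ) (a n i * ν)
          - Complex.exp (-(((a n i * μ) ^ 2 + (a n i * ν) ^ 2 : ℝ) : ℂ) / 4)‖ :=
        norm_prod_sub_prod_le_sum_norm_sub _ (fun _ _ => norm_circleCharFun_le_one _ _)
          fun _ _ => norm_exp_neg_sq_add_sq_div_four_le_one _ _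
    _ ≤ ∑ i ∈ I n, 2 * (|μ| + |ν|) ^ 3 * (I n).sup' (hne n) (a n) * a n i ^ 2 :=
        Finset.sum_le_sum fun i hi =>
          norm_circleCharFun_mul_sub_exp_le (ha0 n i hi) (Finset.le_sup' (a n) hi) hn
    _ = 2 * (|μ| + |ν|) ^ 3 * (I n).sup' (hne n) (a n) := by rw [← Finset.mul_sum, hnorm, mul_one]
end

section
/- Let (M, d) be a compact metric space, T : M → M continuous, and φ : M → ℝ Lipschitz. For n ≥ 1 write φ^n_x := Σ_{j=0}^{n−1} φ(T^j(x)) for the Birkhoff sum. Assume T has the specification-type property: for every ε > 0 there exists M₀ ∈ ℕ such that for every n ≥ 1 and every x ∈ M there is a point x' ∈ M with T^{n+M₀}(x') = x' and d(T^j(x), T^j(x')) ≤ ε for all 0 ≤ j ≤ n−1. Then there exists L ∈ ℝ such that (1/n) inf_{x∈M} φ^n_x → L as n → ∞, the set P_n := {x ∈ M : T^n(x) = x} is nonempty for all sufficiently large n, and (1/n) inf_{x∈P_n} φ^n_x → L as n → ∞. -/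
open Filter

/-- For a continuous map `T` of a compact metric space with the specification-type property
and a Lipschitz function `φ`, the minimal Birkhoff averages `(1/n) inf_{x∈M} φ^n_x` converge
to some limit `L`, periodic points of period `n` exist for all large `n`, and the minimal
Birkhoff averages over periodic points of period `n` converge to the same limit `L`. -/
theorem stmt_18 {M : Type*} [MetricSpace M] [CompactSpace M] [Nonempty M]
    (T : M → M) (hT : Continuous T)
    (φ : M → ℝ) (K : NNReal) (hφ : LipschitzWith K φ)
    (hspec : ∀ ε : ℝ, 0 < ε → ∃ M₀ : ℕ, ∀ n : ℕ, 1 ≤ n → ∀ x : M, ∃ x' : M,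
      T^[n + M₀] x' = x' ∧ ∀ j : ℕ, j ≤ n - 1 → dist (T^[j] x) (T^[j] x') ≤ ε) :
    ∃ L : ℝ,
      Tendsto (fun n : ℕ =>
          (1 / (n : ℝ)) * ⨅ x : M, ∑ j ∈ Finset.range n, φ (T^[j] x))
        atTop (nhds L) ∧
      (∃ n₁ : ℕ, ∀ n : ℕ, n₁ ≤ n → ∃ x : M, T^[n] x = x) ∧
      Tendsto (fun n : ℕ =>
          (1 / (n : ℝ)) *
            ⨅ x : {x : M // T^[n] x = x}, ∑ j ∈ Finset.range n, φ (T^[j] (x : M)))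
        atTop (nhds L) := by
  classical
  set S : ℕ → M → ℝ := fun n x => birkhoffSum T φ n x with hSdef
  have hScont : ∀ n, Continuous (S n) :=
    fun n => continuous_finset_sum _ fun j _ => hφ.continuous.comp (hT.iterate j)
  -- uniform bound on φ
  obtain ⟨z, -, hz⟩ := isCompact_univ.exists_isMaxOn Set.univ_nonempty
    ((continuous_abs.comp hφ.continuous).continuousOn)
  set C : ℝ := |φ z| with hCdef
  have hC : ∀ x : M, |φ x| ≤ C := fun x => hz (Set.mem_univ x)
  have hC0 : (0:ℝ) ≤ C := abs_nonneg _
  have hSb : ∀ n x, |S n x| ≤ n * C := by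
    intro n x
    calc |S n x| ≤ ∑ j ∈ Finset.range n, |φ (T^[j] x)| := Finset.abs_sum_le_sum_abs _ _
      _ ≤ ∑ _j ∈ Finset.range n, C := Finset.sum_le_sum fun j _ => hC _
      _ = n * C := by simp [mul_comm]
  have hBdd : ∀ n, BddBelow (Set.range (S n)) := by
    intro n
    refine ⟨-(n*C), ?_⟩
    rintro r ⟨x, rfl⟩
    exact (abs_le.1 (hSb n x)).1
  set a : ℕ → ℝ := fun n => ⨅ x : M, S n x with hadef
  have ha_le : ∀ (n : ℕ) (x : M), a n ≤ S n x := fun n x => ciInf_le (hBdd n) x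
  have ha_ge : ∀ n : ℕ, -((n:ℝ)*C) ≤ a n :=
    fun n => le_ciInf fun x => (abs_le.1 (hSb n x)).1
  have ha_ub : ∀ n : ℕ, a n ≤ (n:ℝ) * C :=
    fun n => (ha_le n (Classical.arbitrary M)).trans (abs_le.1 (hSb n _)).2
  have hsplit : ∀ (m n : ℕ) (x : M), S (m+n) x = S m x + S n (T^[m] x) :=
    fun m n x => birkhoffSum_add T φ m n x
  have hsuper : ∀ m n : ℕ, a m + a n ≤ a (m + n) := by
    intro m n
    refine le_ciInf fun x => ?_
    rw [hsplit]
    exact add_le_add (ha_le m x) (ha_le n _)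
  have hu : Subadditive (fun n : ℕ => -(a n)) := by
    intro m n
    have := hsuper m n
    show -(a (m+n)) ≤ -(a m) + -(a n)
    linarith
  have hub : BddBelow (Set.range fun n : ℕ => -(a n) / (n:ℝ)) := by
    refine ⟨-C, ?_⟩
    rintro r ⟨n, rfl⟩
    rcases Nat.eq_zero_or_pos n with rfl | hn
    · simp [hC0]
    · have hn' : (0:ℝ) < n := by exact_mod_cast hn
      show -C ≤ -(a n) / (n:ℝ)
      rw [neg_div, neg_le_neg_iff, div_le_iff₀ hn']
      calc a n ≤ (n:ℝ) * C := ha_ub n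
        _ = C * n := mul_comm _ _
  set L : ℝ := -hu.lim with hLdef
  have hA : Tendsto (fun n : ℕ => a n / (n:ℝ)) atTop (nhds L) := by
    have h := (hu.tendsto_lim hub).neg
    simpa [neg_div] using h
  have hgoal1 : Tendsto (fun n : ℕ => (1 / (n:ℝ)) * a n) atTop (nhds L) := by
    have heq : (fun n : ℕ => (1 / (n:ℝ)) * a n) = fun n : ℕ => a n / (n:ℝ) := by
      funext n; rw [one_div, inv_mul_eq_div]
    rw [heq]; exact hA
  -- bound |L| ≤ C
  have hLC : -C ≤ L := by
    refine ge_of_tendsto hA ?_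
    refine eventually_atTop.2 ⟨1, fun n hn => ?_⟩
    have hn' : (0:ℝ) < n := by exact_mod_cast hn
    rw [le_div_iff₀ hn']
    calc -C * n = -((n:ℝ)*C) := by ring
      _ ≤ a n := ha_ge n
  refine ⟨L, hgoal1, ?_, ?_⟩
  · -- periodic points exist for large n
    obtain ⟨M₁, hM₁⟩ := hspec 1 one_pos
    refine ⟨M₁ + 1, fun n hn => ?_⟩
    obtain ⟨x', hx', -⟩ := hM₁ (n - M₁) (by omega) (Classical.arbitrary M)
    refine ⟨x', ?_⟩
    rwa [Nat.sub_add_cancel (by omega)] at hx'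
  · -- convergence over periodic points
    set b : ℕ → ℝ := fun n => ⨅ x : {x : M // T^[n] x = x}, S n (x : M) with hbdef
    have hgoal : Tendsto (fun n : ℕ => b n / (n:ℝ)) atTop (nhds L) := by
      rw [Metric.tendsto_atTop]
      intro δ hδ
      have hK0 : (0:ℝ) ≤ K := K.coe_nonneg
      set ε : ℝ := δ / (2*((K:ℝ)+1)) with hεdef
      have hε : 0 < ε := by positivity
      have hKε : (K:ℝ) * ε ≤ δ / 2 := by
        have h : ε * (2*((K:ℝ)+1)) = δ := div_mul_cancel₀ _ (by positivity)
        nlinarith [hε.le]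
      obtain ⟨M₀, hM₀⟩ := hspec ε hε
      obtain ⟨N₁, hN₁⟩ := Metric.tendsto_atTop.1 hA (δ/4) (by linarith)
      obtain ⟨N₂, hN₂⟩ := exists_nat_gt (8*C*(M₀:ℝ)/δ)
      refine ⟨max (N₁ + 1) N₂ + M₀, fun m hm => ?_⟩
      set n : ℕ := m - M₀ with hndef
      have hmn : m = n + M₀ := by omega
      have hn1 : 1 ≤ n := by omega
      have hnN₁ : N₁ ≤ n := by omega
      have hnN₂ : N₂ ≤ n := by omega
      have hnpos : (0:ℝ) < n := by exact_mod_cast hn1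
      have hmpos : (0:ℝ) < m := by
        have : 1 ≤ m := by omega
        exact_mod_cast this
      -- a minimizer for S n
      obtain ⟨x, -, hx⟩ := isCompact_univ.exists_isMinOn Set.univ_nonempty
        (hScont n).continuousOn
      have hxa : S n x ≤ a n := le_ciInf fun y => isMinOn_iff.1 hx y (Set.mem_univ y)
      obtain ⟨x', hper, hclose⟩ := hM₀ n hn1 x
      have hper' : T^[m] x' = x' := by rw [hmn]; exact hper
      haveI : Nonempty {y : M // T^[m] y = y} := ⟨⟨x', hper'⟩⟩
      have hBdd' : BddBelow (Set.range fun y : {y : M // T^[m] y = y} => S m (y : M)) := by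
        refine ⟨-((m:ℝ)*C), ?_⟩
        rintro r ⟨y, rfl⟩
        exact (abs_le.1 (hSb m y)).1
      have hblow : a m ≤ b m := le_ciInf fun y => ha_le m y
      have hbup : b m ≤ S m x' := ciInf_le hBdd' ⟨x', hper'⟩
      -- estimate S m x'
      have hest1 : S n x' ≤ S n x + (n:ℝ) * ((K:ℝ) * ε) := by
        have : S n x' - S n x ≤ (n:ℝ) * ((K:ℝ) * ε) := by
          rw [hSdef]
          simp only [birkhoffSum]
          rw [← Finset.sum_sub_distrib]
          calc ∑ j ∈ Finset.range n, (φ (T^[j] x') - φ (T^[j] x))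
              ≤ ∑ _j ∈ Finset.range n, (K:ℝ) * ε := by
                refine Finset.sum_le_sum fun j hj => ?_
                have hj' : j ≤ n - 1 := by
                  have := Finset.mem_range.1 hj; omega
                have hd := hclose j hj'
                have := hφ.dist_le_mul (T^[j] x') (T^[j] x)
                rw [Real.dist_eq] at this
                have h1 : φ (T^[j] x') - φ (T^[j] x) ≤ |φ (T^[j] x') - φ (T^[j] x)| :=
                  le_abs_self _
                have h2 : dist (T^[j] x') (T^[j] x) ≤ ε := by
                  rwa [dist_comm] at hd
                calc φ (T^[j] x') - φ (T^[j] x) ≤ (K:ℝ) * dist (T^[j] x') (T^[j] x) :=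
                      h1.trans this
                  _ ≤ (K:ℝ) * ε := by nlinarith
            _ = (n:ℝ) * ((K:ℝ) * ε) := by simp [mul_comm]
        linarith
      have hest2 : S M₀ (T^[n] x') ≤ (M₀:ℝ) * C := by
        calc S M₀ (T^[n] x') ≤ |S M₀ (T^[n] x')| := le_abs_self _
          _ ≤ (M₀:ℝ) * C := hSb M₀ _
      have hSmx' : S m x' ≤ a n + (n:ℝ) * ((K:ℝ) * ε) + (M₀:ℝ) * C := by
        rw [hmn, hsplit n M₀ x']
        linarith
      -- numeric facts
      have h1 : a n < (L + δ/4) * n := by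
        have := hN₁ n hnN₁
        rw [Real.dist_eq, abs_sub_lt_iff] at this
        have h := this.1
        have := (div_lt_iff₀ hnpos).1 (by linarith : a n / n < L + δ/4)
        linarith
      have h2 : L - δ/4 < a m / m := by
        have hmN₁ : N₁ ≤ m := by omega
        have := hN₁ m hmN₁
        rw [Real.dist_eq, abs_sub_lt_iff] at this
        linarith [this.2]
      have h3 : 8*C*(M₀:ℝ) < δ * n := by
        have hn2 : (N₂:ℝ) ≤ n := by exact_mod_cast hnN₂
        have : 8*C*(M₀:ℝ)/δ < (n:ℝ) := lt_of_lt_of_le hN₂ hn2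
        calc 8*C*(M₀:ℝ) = (8*C*(M₀:ℝ)/δ) * δ := by field_simp
          _ < (n:ℝ) * δ := by exact mul_lt_mul_of_pos_right this hδ
          _ = δ * n := mul_comm _ _
      have hM₀0 : (0:ℝ) ≤ (M₀:ℝ) := Nat.cast_nonneg _
      rw [Real.dist_eq, abs_sub_lt_iff]
      constructor
      · -- upper bound
        have hbm : b m < (L + δ) * m := by
          have hmval : (m:ℝ) = (n:ℝ) + (M₀:ℝ) := by exact_mod_cast congrArg Nat.cast hmn
          have hcross : (n:ℝ) * ((K:ℝ)*ε) ≤ (n:ℝ) * (δ/2) :=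
            mul_le_mul_of_nonneg_left hKε (le_of_lt hnpos)
          nlinarith [hbup, hSmx', hxa]
        have : b m / m < L + δ := (div_lt_iff₀ hmpos).2 hbm
        linarith
      · -- lower bound
        have hab : a m / (m:ℝ) ≤ b m / (m:ℝ) := by gcongr
        have : L - δ/4 < b m / m := lt_of_lt_of_le h2 hab
        linarith
    have heq : (fun n : ℕ => (1 / (n:ℝ)) *
        ⨅ x : {x : M // T^[n] x = x}, ∑ j ∈ Finset.range n, φ (T^[j] (x : M)))
        = fun n : ℕ => b n / (n:ℝ) := by
      funext n; rw [one_div, inv_mul_eq_div]; rfl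
    rw [heq]; exact hgoal
end
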